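/- The quadratic space T(l_1,…,l_n) is a quadratic subquotient of \bar T(l_1,…,l_n) by the image of V* ⊂ V* ⊕ (⊕ l_i); in particular T and \bar T have the same class in the Witt group W(F). -/

import Mathlib

open Finset LinearMap Module

section Defs

variable {F V : Type} [Field F] [AddCommGroup V] [Module F V]

/-- `B` is a symplectic (non-degenerate alternating) bilinear form on `V`. -/
def IsSymplectic (B : V →ₗ[F] V →ₗ[F] F) : Prop :=
  (∀ x, B x x = 0) ∧ ∀ x : V, (∀ y, B x y = 0) → x = 0

/-- `l` is a Lagrangian subspace for `B` : it is isotropic and maximal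
(equal to its own `B`-orthogonal). -/
def IsLagrangian (B : V →ₗ[F] V →ₗ[F] F) (l : Submodule F V) : Prop :=
  (∀ x ∈ l, ∀ y ∈ l, B x y = 0) ∧ ∀ x : V, (∀ y ∈ l, B x y = 0) → x ∈ l

/-- The bilinear form `q(v,w) = ∑_{n ≥ i ≥ j ≥ 1} B(v_i, w_j)` on `n`-tuples
(indexed by `1,…,n`, modelled as functions `ℕ → V`). -/
noncomputable def mqL (n : ℕ) (B : V →ₗ[F] V →ₗ[F] F) :
    (ℕ → V) →ₗ[F] (ℕ → V) →ₗ[F] F :=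
  ∑ i ∈ Icc 1 n, ∑ j ∈ Icc 1 i,
    B.compl₁₂ (LinearMap.proj i) (LinearMap.proj j)

/-- Membership in `K(l_1,…,l_n) = ker(Σ : ⊕ l_i → V)`: each component lies in the
corresponding Lagrangian and the components sum to zero. -/
def InK (n : ℕ) (l : ℕ → Submodule F V) (v : ℕ → V) : Prop :=
  (∀ i ∈ Icc 1 n, v i ∈ l i) ∧ ∑ i ∈ Icc 1 n, v i = 0

/-- `K(l_1,…,l_n)` as a submodule of `ℕ → V` (components outside `{1,…,n}` vanish). -/
noncomputable def Ksub (n : ℕ) (l : ℕ → Submodule F V) : Submodule F (ℕ → V) :=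
  (Submodule.pi Set.univ fun i => if i ∈ Icc 1 n then l i else ⊥) ⊓
    LinearMap.ker (∑ i ∈ Icc 1 n, (LinearMap.proj i : (ℕ → V) →ₗ[F] V))

/-- Cyclic successor on `{1,…,n}`. -/
def nxt (n i : ℕ) : ℕ := if i = n then 1 else i + 1

/-- Cyclic predecessor on `{1,…,n}`. -/
def prv (n i : ℕ) : ℕ := if i = 1 then n else i - 1

end Defs

section Witt

variable {F M N : Type} [Field F] [AddCommGroup M] [Module F M]
  [AddCommGroup N] [Module F N]

/-- The orthogonal direct sum of two bilinear forms. -/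
noncomputable def prodBF (B₁ : M →ₗ[F] M →ₗ[F] F) (B₂ : N →ₗ[F] N →ₗ[F] F) :
    (M × N) →ₗ[F] (M × N) →ₗ[F] F :=
  B₁.compl₁₂ (LinearMap.fst F M N) (LinearMap.fst F M N) +
    B₂.compl₁₂ (LinearMap.snd F M N) (LinearMap.snd F M N)

/-- Two bilinear spaces are isometric. -/
def FormIsometric (B₁ : M →ₗ[F] M →ₗ[F] F) (B₂ : N →ₗ[F] N →ₗ[F] F) : Prop :=
  ∃ e : M ≃ₗ[F] N, ∀ x y, B₂ (e x) (e y) = B₁ x y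

/-- A hyperbolic quadratic space: a non-degenerate symmetric form admitting a
totally isotropic subspace of half the dimension. -/
def IsHyperbolicForm (B : M →ₗ[F] M →ₗ[F] F) : Prop :=
  (∀ x y, B x y = B y x) ∧ (∀ x : M, (∀ y, B x y = 0) → x = 0) ∧
    ∃ L : Submodule F M, (∀ x ∈ L, ∀ y ∈ L, B x y = 0) ∧
      Module.finrank F M = 2 * Module.finrank F L

/-- Two (non-degenerate symmetric) bilinear spaces represent the same class in the
Witt group `W(F)`: they become isometric after adding hyperbolic spaces. -/
def WittEquiv (B₁ : M →ₗ[F] M →ₗ[F] F) (B₂ : N →ₗ[F] N →ₗ[F] F) : Prop :=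
  ∃ (m₁ m₂ : ℕ) (h₁ : (Fin m₁ → F) →ₗ[F] (Fin m₁ → F) →ₗ[F] F)
    (h₂ : (Fin m₂ → F) →ₗ[F] (Fin m₂ → F) →ₗ[F] F),
    IsHyperbolicForm h₁ ∧ IsHyperbolicForm h₂ ∧
      FormIsometric (prodBF B₁ h₁) (prodBF B₂ h₂)

end Witt

section MoreDefs

variable {F V : Type} [Field F] [AddCommGroup V] [Module F V]

/-- `A` is an anti-derivative of the tuple `w` (cyclically indexed by `1,…,n`):
`A_{{i,i+1}} - A_{{i-1,i}} = w i`, where the edge `{i,i+1}` is indexed by `i`. -/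
def IsAntiDeriv (n : ℕ) (w A : ℕ → V) : Prop :=
  ∀ i ∈ Icc 1 n, A i - A (prv n i) = w i

/-- The natural map `s : K(l_1,…,l_k) ⊕ K(l_1,l_k,…,l_n) → K(l_1,…,l_n)`,
identity on each Lagrangian summand.  Here `v` is a `k`-tuple and `w` an
`(n-k+2)`-tuple whose slots `1, 2, 3, …` correspond to `l_1, l_k, l_{k+1}, …`. -/
def chainS (k : ℕ) (v w : ℕ → V) : ℕ → V := fun i =>
  (if i ≤ k then v i else 0) +
    (if i = 1 then w 1 else if k ≤ i then w (i - k + 2) else 0)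

/-- The sequence `l_1, l_k, l_{k+1}, …, l_n` (of length `n - k + 2`). -/
def chainL (k : ℕ) (l : ℕ → Submodule F V) : ℕ → Submodule F V := fun j =>
  if j = 1 then l 1 else l (k + j - 2)

end MoreDefs

/-- Projection to the `i`-th Lagrangian component of `V* ⊕ (⊕ l_i)` (ambient model
`(V →ₗ[F] F) × (ℕ → V)`). -/
noncomputable def bprj {F V : Type} [Field F] [AddCommGroup V] [Module F V] (i : ℕ) :
    ((V →ₗ[F] F) × (ℕ → V)) →ₗ[F] V :=
  (LinearMap.proj i).comp (LinearMap.snd F ((V →ₗ[F] F)) (ℕ → V))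

/-- The symmetric bilinear form on `V* ⊕ (⊕ l_i)` polarizing the quadratic form
`\bar q(φ ⊕ a) = 2 Σ_i ⟨φ, a_i⟩ + Σ_{i ≥ j} B(a_i, a_j)`; explicitly
`\bar q(φ⊕a, ψ⊕b) = Σ_i φ(b_i) + Σ_i ψ(a_i) + (1/2) Σ_{i ≥ j} (B(a_i,b_j) + B(b_i,a_j))`. -/
noncomputable def bqL {F V : Type} [Field F] [AddCommGroup V] [Module F V]
    (n : ℕ) (B : V →ₗ[F] V →ₗ[F] F) :
    ((V →ₗ[F] F) × (ℕ → V)) →ₗ[F] ((V →ₗ[F] F) × (ℕ → V)) →ₗ[F] F :=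
  (∑ i ∈ Icc 1 n,
      (LinearMap.id : (V →ₗ[F] F) →ₗ[F] V →ₗ[F] F).compl₁₂
        (LinearMap.fst F ((V →ₗ[F] F)) (ℕ → V)) (bprj i)) +
    (∑ i ∈ Icc 1 n,
      ((LinearMap.id : (V →ₗ[F] F) →ₗ[F] V →ₗ[F] F).flip).compl₁₂
        (bprj i) (LinearMap.fst F ((V →ₗ[F] F)) (ℕ → V))) +
    (2 : F)⁻¹ • (∑ i ∈ Icc 1 n, ∑ j ∈ Icc 1 i,
      (B.compl₁₂ (bprj i) (bprj j) + (B.compl₁₂ (bprj i) (bprj j)).flip))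

/-- The submodule of `(V →ₗ[F] F) × (ℕ → V)` corresponding to `V* ⊕ (⊕_{i=1}^n l_i)`. -/
noncomputable def bW {F V : Type} [Field F] [AddCommGroup V] [Module F V]
    (n : ℕ) (l : ℕ → Submodule F V) : Submodule F ((V →ₗ[F] F) × (ℕ → V)) :=
  (⊤ : Submodule F ((V →ₗ[F] F))).prod
    (Submodule.pi Set.univ fun i => if i ∈ Icc 1 n then l i else ⊥)


section TriAux
variable {F V : Type} [Field F] [AddCommGroup V] [Module F V]

variable {F V : Type} [Field F] [AddCommGroup V] [Module F V]

lemma tri_eq_filter (n : ℕ) (f : ℕ → ℕ → F) :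
    ∑ i ∈ Icc 1 n, ∑ j ∈ Icc 1 i, f i j
      = ∑ p ∈ (Icc 1 n ×ˢ Icc 1 n).filter (fun p => p.2 ≤ p.1), f p.1 p.2 := by
  rw [Finset.sum_filter, Finset.sum_product]
  refine Finset.sum_congr rfl fun i hi => ?_
  rw [← Finset.sum_filter]
  refine Finset.sum_congr ?_ (fun j _ => rfl)
  ext j
  simp only [mem_filter, mem_Icc] at *
  omega

lemma sum_product_bilin (n : ℕ) (B : V →ₗ[F] V →ₗ[F] F) (a b : ℕ → V) :
    ∑ p ∈ Icc 1 n ×ˢ Icc 1 n, B (a p.1) (b p.2)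
      = B (∑ i ∈ Icc 1 n, a i) (∑ i ∈ Icc 1 n, b i) := by
  rw [Finset.sum_product]
  calc ∑ x ∈ Icc 1 n, ∑ y ∈ Icc 1 n, B (a x) (b y)
      = ∑ x ∈ Icc 1 n, B (a x) (∑ y ∈ Icc 1 n, b y) :=
        Finset.sum_congr rfl fun i _ => (map_sum (B (a i)) _ _).symm
    _ = _ := by rw [← LinearMap.sum_apply, ← map_sum]

lemma skew_of_alt (B : V →ₗ[F] V →ₗ[F] F) (halt : ∀ x, B x x = 0) (x y : V) :
    B y x = - B x y := by
  have h := halt (x + y)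
  simp only [map_add, LinearMap.add_apply, halt, zero_add, add_zero] at h
  exact eq_neg_of_add_eq_zero_left h

lemma tri_symm_eq (n : ℕ) (B : V →ₗ[F] V →ₗ[F] F) (halt : ∀ x, B x x = 0)
    (a b : ℕ → V) (hsum : ∑ i ∈ Icc 1 n, a i = 0)
    (hdiag : ∀ i ∈ Icc 1 n, B (a i) (b i) = 0) :
    ∑ i ∈ Icc 1 n, ∑ j ∈ Icc 1 i, B (b i) (a j)
      = ∑ i ∈ Icc 1 n, ∑ j ∈ Icc 1 i, B (a i) (b j) := by
  set s := Icc 1 n ×ˢ Icc 1 n with hs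
  set g : ℕ × ℕ → F := fun p => B (a p.1) (b p.2) with hg
  have hL : ∑ i ∈ Icc 1 n, ∑ j ∈ Icc 1 i, B (b i) (a j)
      = ∑ p ∈ s.filter (fun p => p.2 ≤ p.1), B (b p.1) (a p.2) :=
    tri_eq_filter n _
  have hR : ∑ i ∈ Icc 1 n, ∑ j ∈ Icc 1 i, B (a i) (b j)
      = ∑ p ∈ s.filter (fun p => p.2 ≤ p.1), g p :=
    tri_eq_filter n _
  -- swap the index
  have hswap : ∑ p ∈ s.filter (fun p => p.2 ≤ p.1), B (b p.1) (a p.2)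
      = ∑ p ∈ s.filter (fun p => p.1 ≤ p.2), B (b p.2) (a p.1) := by
    refine Finset.sum_nbij' (fun p => Prod.swap p) (fun p => Prod.swap p) ?_ ?_ ?_ ?_ ?_ <;>
      intro p hp <;>
      simp only [hs, mem_filter, mem_product, Prod.fst_swap, Prod.snd_swap, Prod.swap_swap] at * <;>
      tauto
  have hneg : ∑ p ∈ s.filter (fun p => p.1 ≤ p.2), B (b p.2) (a p.1)
      = - ∑ p ∈ s.filter (fun p => p.1 ≤ p.2), g p := by
    rw [← Finset.sum_neg_distrib]
    exact Finset.sum_congr rfl fun p _ => skew_of_alt B halt _ _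
  have hsplit : (∑ p ∈ s.filter (fun p => p.2 ≤ p.1), g p)
      + ∑ p ∈ s.filter (fun p => p.1 ≤ p.2), g p
      = (∑ p ∈ s, g p) + ∑ p ∈ s.filter (fun p => p.1 = p.2), g p := by
    rw [Finset.sum_filter, Finset.sum_filter, Finset.sum_filter, ← Finset.sum_add_distrib,
      ← Finset.sum_add_distrib]
    refine Finset.sum_congr rfl fun p _ => ?_
    rcases lt_trichotomy p.1 p.2 with h | h | h
    · simp [h.le, h.ne, not_le.mpr h]
    · simp [h, le_of_eq h, le_of_eq h.symm]
    · simp [h.le, h.ne', not_le.mpr h]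
  have hfull : ∑ p ∈ s, g p = 0 := by
    rw [hg, hs]
    rw [sum_product_bilin n B a b, hsum, map_zero, LinearMap.zero_apply]
  have hdiag' : ∑ p ∈ s.filter (fun p => p.1 = p.2), g p = 0 := by
    refine Finset.sum_eq_zero fun p hp => ?_
    simp only [mem_filter, hs, mem_product] at hp
    show B (a p.1) (b p.2) = 0
    rw [← hp.2]
    exact hdiag p.1 hp.1.1
  rw [hL, hswap, hneg, hR]
  have h0 : (∑ p ∈ s.filter (fun p => p.1 ≤ p.2), g p)
      + ∑ p ∈ s.filter (fun p => p.2 ≤ p.1), g p = 0 := by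
    rw [add_comm, hsplit, hfull, hdiag', add_zero]
  exact neg_eq_of_add_eq_zero_right h0


lemma mqL_apply (n : ℕ) (B : V →ₗ[F] V →ₗ[F] F) (a b : ℕ → V) :
    mqL n B a b = ∑ i ∈ Icc 1 n, ∑ j ∈ Icc 1 i, B (a i) (b j) := by
  simp [mqL, LinearMap.sum_apply, LinearMap.compl₁₂_apply, LinearMap.proj_apply]

lemma bqL_apply (n : ℕ) (B : V →ₗ[F] V →ₗ[F] F) (φ ψ : V →ₗ[F] F) (a b : ℕ → V) :
    bqL n B (φ, a) (ψ, b) = φ (∑ i ∈ Icc 1 n, b i) + ψ (∑ i ∈ Icc 1 n, a i) +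
      (2 : F)⁻¹ * ((∑ i ∈ Icc 1 n, ∑ j ∈ Icc 1 i, B (a i) (b j)) +
        ∑ i ∈ Icc 1 n, ∑ j ∈ Icc 1 i, B (b i) (a j)) := by
  simp only [bqL, LinearMap.add_apply, LinearMap.sum_apply, LinearMap.smul_apply,
    LinearMap.compl₁₂_apply, LinearMap.fst_apply, LinearMap.flip_apply, LinearMap.id_apply,
    bprj, LinearMap.comp_apply, LinearMap.snd_apply, LinearMap.proj_apply,
    map_sum, smul_eq_mul, Finset.sum_add_distrib]

lemma bqL_key (hchar : (2:F) ≠ 0) (n : ℕ) (B : V →ₗ[F] V →ₗ[F] F) (halt : ∀ x, B x x = 0)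
    (l : ℕ → Submodule F V) (hl : ∀ i ∈ Icc 1 n, IsLagrangian B (l i))
    (φ ψ : V →ₗ[F] F) (a b : ℕ → V)
    (ha : ∀ i ∈ Icc 1 n, a i ∈ l i) (hsa : ∑ i ∈ Icc 1 n, a i = 0)
    (hb : ∀ i ∈ Icc 1 n, b i ∈ l i) :
    bqL n B (φ, a) (ψ, b) = φ (∑ i ∈ Icc 1 n, b i) + mqL n B a b := by
  have hdiag : ∀ i ∈ Icc 1 n, B (a i) (b i) = 0 := fun i hi =>
    (hl i hi).1 (a i) (ha i hi) (b i) (hb i hi)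
  rw [bqL_apply, mqL_apply, hsa, map_zero,
    tri_symm_eq n B halt a b hsa hdiag]
  set S := ∑ i ∈ Icc 1 n, ∑ j ∈ Icc 1 i, B (a i) (b j) with hS
  have h2 : (2:F)⁻¹ * (S + S) = S := by
    rw [← two_mul, ← mul_assoc, inv_mul_cancel₀ hchar, one_mul]
  rw [h2, add_zero]

lemma bqL_symm (n : ℕ) (B : V →ₗ[F] V →ₗ[F] F)
    (p r : (V →ₗ[F] F) × (ℕ → V)) : bqL n B p r = bqL n B r p := by
  obtain ⟨φ, a⟩ := p; obtain ⟨ψ, b⟩ := r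
  rw [bqL_apply, bqL_apply]; ring

lemma fd_pi [FiniteDimensional F V] (n : ℕ) (l : ℕ → Submodule F V) :
    FiniteDimensional F
      (Submodule.pi Set.univ fun i => if i ∈ Icc 1 n then l i else (⊥ : Submodule F V)) := by
  set p := Submodule.pi Set.univ fun i => if i ∈ Icc 1 n then l i else (⊥ : Submodule F V)
    with hp
  let f : p →ₗ[F] ({ i // i ∈ Icc 1 n } → V) :=
    (LinearMap.pi fun i : {i // i ∈ Icc 1 n} =>
      (LinearMap.proj i.1 : (ℕ → V) →ₗ[F] V)) ∘ₗ p.subtype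
  have hinj : Function.Injective f := by
    intro x y hxy
    apply Subtype.ext; funext i
    by_cases hi : i ∈ Icc 1 n
    · exact congrFun hxy ⟨i, hi⟩
    · have hx := x.2 i trivial
      have hy := y.2 i trivial
      simp only [if_neg hi, SetLike.mem_coe, Submodule.mem_bot] at hx hy
      rw [hx, hy]
  exact Module.Finite.of_injective f hinj

lemma fd_bW [FiniteDimensional F V] (n : ℕ) (l : ℕ → Submodule F V) :
    FiniteDimensional F (bW n l) := by
  set p := Submodule.pi Set.univ fun i => if i ∈ Icc 1 n then l i else (⊥ : Submodule F V)
    with hp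
  haveI := fd_pi n l
  let f : (bW n l) →ₗ[F] (V →ₗ[F] F) × p :=
    LinearMap.prod ((LinearMap.fst F _ _) ∘ₗ (bW n l).subtype)
      (LinearMap.codRestrict p ((LinearMap.snd F _ _) ∘ₗ (bW n l).subtype)
        (fun x => x.2.2))
  have hinj : Function.Injective f := by
    intro x y hxy
    apply Subtype.ext
    have h1 := congrArg Prod.fst hxy
    have h2 := congrArg (fun z => ((Prod.snd z : p) : ℕ → V)) hxy
    exact Prod.ext h1 h2
  exact Module.Finite.of_injective f hinj

lemma fd_Ksub [FiniteDimensional F V] (n : ℕ) (l : ℕ → Submodule F V) :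
    FiniteDimensional F (Ksub n l) := by
  haveI := fd_pi n l
  exact Submodule.finiteDimensional_of_le (inf_le_left)

lemma Ksub_mem_l {n : ℕ} {l : ℕ → Submodule F V} {v : ℕ → V} (hv : v ∈ Ksub n l) :
    ∀ i ∈ Icc 1 n, v i ∈ l i := by
  intro i hi
  have := (Submodule.mem_inf.1 hv).1
  have h2 := (Submodule.mem_pi.1 this) i trivial
  rwa [if_pos hi] at h2

lemma Ksub_sum_eq {n : ℕ} {l : ℕ → Submodule F V} {v : ℕ → V} (hv : v ∈ Ksub n l) :
    ∑ i ∈ Icc 1 n, v i = 0 := by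
  have h2 := (Submodule.mem_inf.1 hv).2
  rw [LinearMap.mem_ker, LinearMap.sum_apply] at h2
  simpa [LinearMap.proj_apply] using h2

lemma bW_mem_l {n : ℕ} {l : ℕ → Submodule F V} {p : (V →ₗ[F] F) × (ℕ → V)}
    (hp : p ∈ bW n l) : ∀ i ∈ Icc 1 n, p.2 i ∈ l i := by
  intro i hi
  have h1 := (Submodule.mem_prod.1 hp).2
  have h2 := (Submodule.mem_pi.1 h1) i trivial
  rwa [if_pos hi] at h2

lemma mem_bW_of {n : ℕ} {l : ℕ → Submodule F V} (φ : V →ₗ[F] F) {a : ℕ → V}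
    (ha : ∀ i, a i ∈ (if i ∈ Icc 1 n then l i else (⊥ : Submodule F V))) :
    (φ, a) ∈ bW n l :=
  Submodule.mem_prod.2 ⟨trivial, Submodule.mem_pi.2 fun i _ => ha i⟩

lemma mem_bW_zero {n : ℕ} {l : ℕ → Submodule F V} (φ : V →ₗ[F] F) :
    (φ, (0 : ℕ → V)) ∈ bW n l :=
  mem_bW_of φ (fun i => Submodule.zero_mem _)

lemma mem_bW_ofK {n : ℕ} {l : ℕ → Submodule F V} {v : ℕ → V} (hv : v ∈ Ksub n l) :
    ((0 : V →ₗ[F] F), v) ∈ bW n l :=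
  mem_bW_of 0 (fun i => (Submodule.mem_pi.1 (Submodule.mem_inf.1 hv).1) i trivial)


lemma mem_Ksub_of {n : ℕ} {l : ℕ → Submodule F V} {p : (V →ₗ[F] F) × (ℕ → V)}
    (hp : p ∈ bW n l) (hs : ∑ i ∈ Icc 1 n, p.2 i = 0) : p.2 ∈ Ksub n l := by
  refine Submodule.mem_inf.2 ⟨(Submodule.mem_prod.1 hp).2, ?_⟩
  rw [LinearMap.mem_ker, LinearMap.sum_apply]
  simpa [LinearMap.proj_apply] using hs

end TriAux

section GeneralWitt
variable {F M N K₀ : Type} [Field F] [AddCommGroup M] [Module F M]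
  [AddCommGroup N] [Module F N] [AddCommGroup K₀] [Module F K₀]
  [FiniteDimensional F M] [FiniteDimensional F N]

variable {F M N K₀ : Type} [Field F] [AddCommGroup M] [Module F M]
  [AddCommGroup N] [Module F N] [AddCommGroup K₀] [Module F K₀]
  [FiniteDimensional F M] [FiniteDimensional F N]

/-- The subquotient theorem: if `N` (with nondeg symmetric form `q'`) is realized as the
quadratic subquotient of `M` (with nondeg symmetric form `Q`) by an isotropic `I`, then
`q'` and `Q` are Witt equivalent. -/
theorem wittEquiv_of_subquotient
    (Q : M →ₗ[F] M →ₗ[F] F) (q' : N →ₗ[F] N →ₗ[F] F)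
    (hQs : ∀ x y, Q x y = Q y x) (hQn : ∀ x : M, (∀ y, Q x y = 0) → x = 0)
    (hq's : ∀ x y, q' x y = q' y x) (hq'n : ∀ x : N, (∀ y, q' x y = 0) → x = 0)
    (I : Submodule F M) (hI : ∀ x ∈ I, ∀ y ∈ I, Q x y = 0)
    (g : K₀ →ₗ[F] M) (s : K₀ →ₗ[F] N) (hs : Function.Surjective s)
    (hform : ∀ x y, Q (g x) (g y) = q' (s x) (s y))
    (hrange : LinearMap.range g ⊔ I = LinearMap.BilinForm.orthogonal Q I) :
    WittEquiv q' Q := by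
  classical
  have hrefl : Q.IsRefl := fun x y h => by rw [hQs]; exact h
  set P : Submodule F M := LinearMap.BilinForm.orthogonal Q I with hP
  have hIP : I ≤ P := fun x hx => fun y hy => hI y hy x hx
  have hgP : LinearMap.range g ≤ P := by
    rw [← hrange]; exact le_sup_left
  obtain ⟨J, hJ⟩ := Submodule.exists_isCompl P
  set U : Submodule F M := I ⊔ J with hU
  -- every element of M is p + j
  have hdecomp : ∀ m : M, ∃ p ∈ P, ∃ j ∈ J, m = p + j := by
    intro m
    have : m ∈ P ⊔ J := by rw [hJ.codisjoint.eq_top]; trivial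
    obtain ⟨p, hp, j, hj, h⟩ := Submodule.mem_sup.1 this
    exact ⟨p, hp, j, hj, h.symm⟩
  have hPJ : ∀ x : M, x ∈ P → x ∈ J → x = 0 := by
    intro x h1 h2
    have := hJ.disjoint.eq_bot (α := Submodule F M)
    have : x ∈ P ⊓ J := ⟨h1, h2⟩
    rwa [hJ.disjoint.eq_bot, Submodule.mem_bot] at this
  -- orthogonality of I to all of P
  have hIPorth : ∀ x ∈ I, ∀ p ∈ P, Q x p = 0 := fun x hx p hp => hp x hx
  -- restriction of Q to U is nondegenerate
  have hUnd : (LinearMap.BilinForm.restrict Q U).Nondegenerate := by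
    refine (LinearMap.IsRefl.nondegenerate_iff_separatingLeft
      (B := LinearMap.BilinForm.restrict Q U) (fun x y h => hrefl _ _ h)).2 ?_
    rintro ⟨x, hxU⟩ hx
    obtain ⟨i, hi, j, hj, rfl⟩ := Submodule.mem_sup.1 hxU
    have hj0 : j = 0 := by
      apply hPJ j _ hj
      intro i' hi'
      have h1 : Q (i + j) i' = 0 := hx ⟨i', Submodule.mem_sup_left hi'⟩
      have h2 : Q i i' = 0 := hI i hi i' hi'
      have : Q j i' = 0 := by
        have := h1; rw [map_add, LinearMap.add_apply, h2, zero_add] at this; exact this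
      exact hrefl _ _ this
    subst hj0
    have hi0 : i = 0 := by
      apply hQn
      intro m
      obtain ⟨p, hp, j', hj', rfl⟩ := hdecomp m
      have hQij' : Q i j' = 0 := by
        have := hx ⟨j', Submodule.mem_sup_right hj'⟩
        simpa using this
      have hQip : Q i p = 0 := hIPorth i hi p hp
      rw [map_add, hQip, hQij', add_zero]
    simp [hi0]
  have hcompl : IsCompl U (LinearMap.BilinForm.orthogonal Q U) :=
    LinearMap.BilinForm.isCompl_orthogonal_of_restrict_nondegenerate hrefl hUnd
  set W : Submodule F M := LinearMap.BilinForm.orthogonal Q U with hW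
  -- dimension bookkeeping
  have hIJdisj : I ⊓ J = ⊥ := by
    rw [eq_bot_iff]
    rintro x ⟨h1, h2⟩
    simpa using hPJ x (hIP h1) h2
  have hfinP : finrank F P = finrank F M - finrank F I :=
    LinearMap.BilinForm.finrank_orthogonal ((LinearMap.IsRefl.nondegenerate_iff_separatingLeft hrefl).2 hQn) I
  have hfinJ : finrank F P + finrank F J = finrank F M := by
    rw [← Submodule.finrank_sup_add_finrank_inf_eq]
    rw [hJ.codisjoint.eq_top, hJ.disjoint.eq_bot]
    simp
  have hIle : finrank F I ≤ finrank F M := Submodule.finrank_le I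
  have hfinJ' : finrank F J = finrank F I := by omega
  have hfinU : finrank F U = 2 * finrank F I := by
    have := Submodule.finrank_sup_add_finrank_inf_eq I J
    rw [hIJdisj] at this
    simp only [finrank_bot, add_zero] at this
    rw [hU]
    omega
  have hfinW : finrank F W = finrank F M - finrank F U :=
    LinearMap.BilinForm.finrank_orthogonal ((LinearMap.IsRefl.nondegenerate_iff_separatingLeft hrefl).2 hQn) U
  -- orthogonality facts about W
  have hWU : ∀ w ∈ W, ∀ u ∈ U, Q w u = 0 := fun w hw u hu => hrefl _ _ (hw u hu)
  have hUW : ∀ u ∈ U, ∀ w ∈ W, Q u w = 0 := fun u hu w hw => hw u hu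
  -- restriction of Q to W is nondegenerate
  have hWnd : ∀ w ∈ W, (∀ w' ∈ W, Q w w' = 0) → w = 0 := by
    intro w hw h
    apply hQn
    intro m
    have : m ∈ U ⊔ W := by rw [hcompl.codisjoint.eq_top]; trivial
    obtain ⟨u, hu, w', hw', rfl⟩ := Submodule.mem_sup.1 this
    rw [map_add, hWU w hw u hu, h w' hw', add_zero]
  -- W ≤ P
  have hWP : W ≤ P := LinearMap.BilinForm.orthogonal_le le_sup_left
  -- U ⊓ P = I
  have hUP : ∀ x ∈ U, x ∈ P → x ∈ I := by
    intro x hxU hxP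
    obtain ⟨i, hi, j, hj, rfl⟩ := Submodule.mem_sup.1 hxU
    have : j = 0 := hPJ j (by
      have : (i + j) - i ∈ P := Submodule.sub_mem P hxP (hIP hi)
      simpa using this) hj
    subst this
    simpa using hi
  -- projection onto W along U
  have hcompl' : IsCompl W U := hcompl.symm
  set projW : M →ₗ[F] W := W.linearProjOfIsCompl U hcompl' with hprojWdef
  have hprojW_left : ∀ w : W, projW (w : M) = w := fun w =>
    Submodule.linearProjOfIsCompl_apply_left hcompl' w
  have hprojW_right : ∀ u ∈ U, projW u = 0 := fun u hu =>
    Submodule.projectionOnto_apply_of_mem_right hcompl' hu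
  have hsub : ∀ m : M, m - (projW m : M) ∈ U := by
    intro m
    have h : (projW m : M) + (U.linearProjOfIsCompl W hcompl'.symm m : M) = m :=
      Submodule.projection_add_projection_eq_self hcompl' m
    have h2 : m - (projW m : M) = (U.linearProjOfIsCompl W hcompl'.symm m : M) :=
      sub_eq_of_eq_add' h.symm
    rw [h2]
    exact Submodule.coe_mem _
  set e₀ : K₀ →ₗ[F] W := projW ∘ₗ g with he₀
  have hgdiff : ∀ k : K₀, g k - (e₀ k : M) ∈ I := by
    intro k
    apply hUP _ (hsub (g k))
    exact Submodule.sub_mem P (hgP ⟨k, rfl⟩) (hWP (e₀ k).2)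
  have hform₀ : ∀ k k' : K₀, Q (e₀ k : M) (e₀ k' : M) = q' (s k) (s k') := by
    intro k k'
    rw [← hform]
    have expand : Q (g k) (g k')
        = Q (g k - (e₀ k : M)) (g k' - (e₀ k' : M)) + Q (g k - (e₀ k : M)) (e₀ k' : M)
          + Q (e₀ k : M) (g k' - (e₀ k' : M)) + Q (e₀ k : M) (e₀ k' : M) := by
      have ha : g k = (g k - (e₀ k : M)) + (e₀ k : M) := by abel
      have hb : g k' = (g k' - (e₀ k' : M)) + (e₀ k' : M) := by abel
      conv_lhs => rw [ha, hb]
      simp only [map_add, LinearMap.add_apply]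
      ring
    have t1 : Q (g k - (e₀ k : M)) (g k' - (e₀ k' : M)) = 0 :=
      hIPorth _ (hgdiff k) _ (hIP (hgdiff k'))
    have t2 : Q (g k - (e₀ k : M)) (e₀ k' : M) = 0 :=
      hIPorth _ (hgdiff k) _ (hWP (e₀ k').2)
    have t3 : Q (e₀ k : M) (g k' - (e₀ k' : M)) = 0 :=
      hrefl _ _ (hIPorth _ (hgdiff k') _ (hWP (e₀ k).2))
    rw [expand, t1, t2, t3]
    ring
  have he₀surj : ∀ w : W, ∃ k, e₀ k = w := by
    intro w
    have hw : (w : M) ∈ LinearMap.range g ⊔ I := by rw [hrange]; exact hWP w.2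
    obtain ⟨x, hx, i, hi, hxi⟩ := Submodule.mem_sup.1 hw
    obtain ⟨k, rfl⟩ := hx
    refine ⟨k, ?_⟩
    have h1 : projW (w : M) = w := hprojW_left w
    rw [← hxi] at h1
    rw [map_add] at h1
    have h2 : projW i = 0 := hprojW_right i (Submodule.mem_sup_left hi)
    rw [h2, add_zero] at h1
    exact h1
  have hker : ∀ k : K₀, s k = 0 → e₀ k = 0 := by
    intro k hk
    have h1 : ∀ w' ∈ W, Q (e₀ k : M) w' = 0 := by
      intro w' hw'
      obtain ⟨k', hk'⟩ := he₀surj ⟨w', hw'⟩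
      have := hform₀ k k'
      rw [hk, map_zero, LinearMap.zero_apply, hk'] at this
      exact this
    have := hWnd (e₀ k : M) (e₀ k).2 h1
    exact Subtype.ext this
  obtain ⟨σ, hσ⟩ := s.exists_rightInverse_of_surjective (LinearMap.range_eq_top.2 hs)
  have hss : ∀ x : N, s (σ x) = x := fun x => by
    have := LinearMap.ext_iff.1 hσ x
    simpa using this
  set f : N →ₗ[F] W := e₀ ∘ₗ σ with hf
  have hf_form : ∀ x y : N, Q (f x : M) (f y : M) = q' x y := by
    intro x y
    rw [hf]
    simp only [LinearMap.comp_apply]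
    rw [hform₀, hss, hss]
  have hf_inj : Function.Injective f := by
    rw [← LinearMap.ker_eq_bot, eq_bot_iff]
    intro x hx
    rw [LinearMap.mem_ker] at hx
    rw [Submodule.mem_bot]
    apply hq'n
    intro y
    rw [← hf_form x y, hx]
    simp
  have hf_surj : Function.Surjective f := by
    intro w
    obtain ⟨k, hk⟩ := he₀surj w
    refine ⟨s k, ?_⟩
    have h0 : s (σ (s k) - k) = 0 := by rw [map_sub, hss, sub_self]
    have h1 : e₀ (σ (s k) - k) = 0 := hker _ h0
    rw [map_sub] at h1
    have : e₀ (σ (s k)) = e₀ k := by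
      have := sub_eq_zero.1 h1
      exact this
    rw [hf]
    simp only [LinearMap.comp_apply]
    rw [this, hk]
  set fe : N ≃ₗ[F] W := LinearEquiv.ofBijective f ⟨hf_inj, hf_surj⟩ with hfe
  -- hyperbolic form on U
  set m₁ : ℕ := finrank F U with hm₁
  set eb : (Fin m₁ → F) ≃ₗ[F] U := (Module.finBasis F U).equivFun.symm with heb
  set h₁ : (Fin m₁ → F) →ₗ[F] (Fin m₁ → F) →ₗ[F] F :=
    Q.compl₁₂ (U.subtype ∘ₗ (eb : (Fin m₁ → F) →ₗ[F] U))
      (U.subtype ∘ₗ (eb : (Fin m₁ → F) →ₗ[F] U)) with hh₁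
  have h₁_apply : ∀ x y, h₁ x y = Q (eb x : M) (eb y : M) := fun x y => rfl
  have hIU : I ≤ U := le_sup_left
  have hyp₁ : IsHyperbolicForm h₁ := by
    refine ⟨fun x y => by rw [h₁_apply, h₁_apply, hQs], ?_, ?_⟩
    · intro x hx
      have h2 : ∀ u : U, Q (eb x : M) (u : M) = 0 := by
        intro u
        have := hx (eb.symm u)
        rw [h₁_apply, LinearEquiv.apply_symm_apply] at this
        exact this
      have h3 : eb x = 0 := by
        apply hUnd.1
        intro u
        exact h2 u
      have := eb.map_eq_zero_iff.1 h3
      exact this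
    · refine ⟨(I.comap U.subtype).map (eb.symm : U →ₗ[F] (Fin m₁ → F)), ?_, ?_⟩
      · rintro x ⟨u, hu, rfl⟩ y ⟨u', hu', rfl⟩
        rw [h₁_apply]
        simp only [LinearEquiv.coe_coe, LinearEquiv.apply_symm_apply]
        exact hI _ hu _ hu'
      · have e1 : finrank F (Fin m₁ → F) = m₁ := Module.finrank_fin_fun F
        have e2 : finrank F ((I.comap U.subtype).map
            (eb.symm : U →ₗ[F] (Fin m₁ → F))) = finrank F (I.comap U.subtype) := by
          exact LinearEquiv.finrank_map_eq eb.symm _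
        have e3 : finrank F (I.comap U.subtype) = finrank F I :=
          (Submodule.comapSubtypeEquivOfLe hIU).finrank_eq
        rw [e1, e2, e3, ← hfinU]
  have hyp₂ : IsHyperbolicForm (0 : (Fin 0 → F) →ₗ[F] (Fin 0 → F) →ₗ[F] F) := by
    refine ⟨fun x y => rfl, fun x _ => Subsingleton.elim x 0, ⟨⊥, by simp, ?_⟩⟩
    rw [Module.finrank_fin_fun F]
    simp
  -- the final isometry
  set st3 : M ≃ₗ[F] M × (Fin 0 → F) :=
    LinearEquiv.ofLinear (LinearMap.prod LinearMap.id 0)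
      (LinearMap.fst F M (Fin 0 → F))
      (LinearMap.ext fun x => Prod.ext rfl (Subsingleton.elim _ _))
      (LinearMap.ext fun x => rfl) with hst3
  set e : (N × (Fin m₁ → F)) ≃ₗ[F] (M × (Fin 0 → F)) :=
    (LinearEquiv.prodCongr fe eb).trans ((Submodule.prodEquivOfIsCompl W U hcompl').trans st3)
    with he
  refine ⟨m₁, 0, h₁, 0, hyp₁, hyp₂, e, ?_⟩
  intro z z'
  have hev : ∀ w : N × (Fin m₁ → F), e w = (((fe w.1 : M) + (eb w.2 : M) : M), 0) := by
    intro w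
    rw [he]
    simp only [LinearEquiv.trans_apply, LinearEquiv.prodCongr_apply]
    rw [Submodule.coe_prodEquivOfIsCompl']
    rfl
  rw [hev, hev]
  have hbf1 : ∀ (m m' : M), prodBF Q (0 : (Fin 0 → F) →ₗ[F] (Fin 0 → F) →ₗ[F] F)
      (m, (0 : Fin 0 → F)) (m', (0 : Fin 0 → F)) = Q m m' := by
    intro m m'
    simp [prodBF]
  have hbf2 : prodBF q' h₁ z z' = q' z.1 z'.1 + h₁ z.2 z'.2 := by
    simp [prodBF]
  rw [hbf1, hbf2]
  simp only [map_add, LinearMap.add_apply]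
  have c1 : Q (fe z.1 : M) (eb z'.2 : M) = 0 := hWU _ (fe z.1).2 _ (eb z'.2).2
  have c2 : Q (eb z.2 : M) (fe z'.1 : M) = 0 := hUW _ (eb z.2).2 _ (fe z'.1).2
  have c3 : Q (fe z.1 : M) (fe z'.1 : M) = q' z.1 z'.1 := hf_form z.1 z'.1
  have c4 : Q (eb z.2 : M) (eb z'.2 : M) = h₁ z.2 z'.2 := (h₁_apply z.2 z'.2).symm
  rw [c1, c2, c3, c4]
  ring


end GeneralWitt

set_option maxHeartbeats 1000000 in
/-- `T(l_1,…,l_n)` is the quadratic subquotient of `\bar T(l_1,…,l_n)` by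
the (isotropic) image of `V* ⊂ V* ⊕ (⊕ l_i)`: the orthogonal complement of `V*` consists
of the `(φ,a)` with `Σ a_i = 0`, on which `\bar q` restricts to `q`; in particular `T`
and `\bar T` have the same class in the Witt group `W(F)`. -/
theorem T_subquotient_of_barT
    {F V : Type} [Field F] [AddCommGroup V] [Module F V] [FiniteDimensional F V]
    (hchar : (2 : F) ≠ 0) (n : ℕ) (hn : 1 ≤ n)
    (B : V →ₗ[F] V →ₗ[F] F) (hB : IsSymplectic B)
    (l : ℕ → Submodule F V) (hl : ∀ i ∈ Icc 1 n, IsLagrangian B (l i))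
    (t : (↥(Ksub n l) ⧸ LinearMap.ker ((mqL n B).domRestrict₁₂ (Ksub n l) (Ksub n l))) →ₗ[F]
         (↥(Ksub n l) ⧸ LinearMap.ker ((mqL n B).domRestrict₁₂ (Ksub n l) (Ksub n l))) →ₗ[F] F)
    (ht : ∀ x y : ↥(Ksub n l),
      t (Submodule.Quotient.mk x) (Submodule.Quotient.mk y) = mqL n B x y)
    (bt : (@HasQuotient.Quotient _ _ (Submodule.hasQuotient (R := F) (M := ↥(bW n l)))
            (LinearMap.ker ((bqL n B).domRestrict₁₂ (bW n l) (bW n l)))) →ₗ[F]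
          (@HasQuotient.Quotient _ _ (Submodule.hasQuotient (R := F) (M := ↥(bW n l)))
            (LinearMap.ker ((bqL n B).domRestrict₁₂ (bW n l) (bW n l)))) →ₗ[F] F)
    (hbt : ∀ x y : ↥(bW n l),
      bt (Submodule.Quotient.mk x) (Submodule.Quotient.mk y) = bqL n B x y) :
    (∀ φ ψ : V →ₗ[F] F, bqL n B (φ, 0) (ψ, 0) = 0) ∧
      (∀ p : (V →ₗ[F] F) × (ℕ → V), p ∈ bW n l →
        ((∀ ψ : V →ₗ[F] F, bqL n B (ψ, 0) p = 0) ↔ ∑ i ∈ Icc 1 n, p.2 i = 0)) ∧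
      (∀ p r : (V →ₗ[F] F) × (ℕ → V), p ∈ bW n l → r ∈ bW n l →
        (∑ i ∈ Icc 1 n, p.2 i = 0) → (∑ i ∈ Icc 1 n, r.2 i = 0) →
          bqL n B p r = mqL n B p.2 r.2) ∧
      WittEquiv t bt := by
    classical
  have halt := hB.1
  have key : ∀ (φ ψ : V →ₗ[F] F) (a b : ℕ → V),
      (∀ i ∈ Icc 1 n, a i ∈ l i) → (∑ i ∈ Icc 1 n, a i = 0) →
      (∀ i ∈ Icc 1 n, b i ∈ l i) →
      bqL n B (φ, a) (ψ, b) = φ (∑ i ∈ Icc 1 n, b i) + mqL n B a b :=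
    fun φ ψ a b ha hsa hb => bqL_key hchar n B halt l hl φ ψ a b ha hsa hb
  have hzl : ∀ i ∈ Icc 1 n, (0 : ℕ → V) i ∈ l i := fun i _ => Submodule.zero_mem _
  have hz0 : ∑ i ∈ Icc 1 n, (0 : ℕ → V) i = 0 := by simp
  have part1 : ∀ φ ψ : V →ₗ[F] F, bqL n B (φ, 0) (ψ, 0) = 0 := by
    intro φ ψ
    rw [key φ ψ 0 0 hzl hz0 hzl, hz0]
    simp
  have keyval : ∀ (ψ : V →ₗ[F] F) (p : (V →ₗ[F] F) × (ℕ → V)), p ∈ bW n l →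
      bqL n B (ψ, 0) p = ψ (∑ i ∈ Icc 1 n, p.2 i) := by
    intro ψ p hp
    have h := key ψ p.1 0 p.2 hzl hz0 (bW_mem_l hp)
    calc bqL n B (ψ, 0) p = bqL n B (ψ, 0) (p.1, p.2) := by rw [Prod.mk.eta]
      _ = ψ (∑ i ∈ Icc 1 n, p.2 i) + mqL n B 0 p.2 := h
      _ = ψ (∑ i ∈ Icc 1 n, p.2 i) := by rw [map_zero, LinearMap.zero_apply, add_zero]
  have part2 : ∀ p : (V →ₗ[F] F) × (ℕ → V), p ∈ bW n l →
      ((∀ ψ : V →ₗ[F] F, bqL n B (ψ, 0) p = 0) ↔ ∑ i ∈ Icc 1 n, p.2 i = 0) := by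
    intro p hp
    constructor
    · intro h
      have hψ : ∀ ψ : V →ₗ[F] F, ψ (∑ i ∈ Icc 1 n, p.2 i) = 0 := fun ψ => by
        rw [← keyval ψ p hp]; exact h ψ
      exact (Module.forall_dual_apply_eq_zero_iff F _).1 hψ
    · intro hs ψ
      rw [keyval ψ p hp, hs, map_zero]
  have part3 : ∀ p r : (V →ₗ[F] F) × (ℕ → V), p ∈ bW n l → r ∈ bW n l →
      (∑ i ∈ Icc 1 n, p.2 i = 0) → (∑ i ∈ Icc 1 n, r.2 i = 0) →
        bqL n B p r = mqL n B p.2 r.2 := by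
    intro p r hp hr hsp hsr
    have h := key p.1 r.1 p.2 r.2 (bW_mem_l hp) hsp (bW_mem_l hr)
    calc bqL n B p r = bqL n B (p.1, p.2) (r.1, r.2) := by rw [Prod.mk.eta, Prod.mk.eta]
      _ = p.1 (∑ i ∈ Icc 1 n, r.2 i) + mqL n B p.2 r.2 := h
      _ = mqL n B p.2 r.2 := by rw [hsr, map_zero, zero_add]
  refine ⟨part1, part2, part3, ?_⟩
  -- the Witt equivalence
  haveI hfdK : FiniteDimensional F (Ksub n l) := fd_Ksub n l
  haveI hfdW : FiniteDimensional F (bW n l) := fd_bW n l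
  -- symmetry and nondegeneracy of t
  have hq's : ∀ x y, t x y = t y x := by
    intro x y
    obtain ⟨a, rfl⟩ := Submodule.Quotient.mk_surjective _ x
    obtain ⟨b, rfl⟩ := Submodule.Quotient.mk_surjective _ y
    rw [ht, ht, mqL_apply, mqL_apply]
    exact (tri_symm_eq n B halt a.1 b.1 (Ksub_sum_eq a.2)
      (fun i hi => (hl i hi).1 _ (Ksub_mem_l a.2 i hi) _ (Ksub_mem_l b.2 i hi))).symm
  have hq'n : ∀ x, (∀ y, t x y = 0) → x = 0 := by
    intro x hx
    obtain ⟨a, rfl⟩ := Submodule.Quotient.mk_surjective _ x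
    rw [Submodule.Quotient.mk_eq_zero, LinearMap.mem_ker]
    apply LinearMap.ext
    intro b
    have h := hx (Submodule.Quotient.mk b)
    rw [ht] at h
    simpa [LinearMap.domRestrict₁₂_apply] using h
  have hQs : ∀ x y, bt x y = bt y x := by
    intro x y
    obtain ⟨a, rfl⟩ := Submodule.Quotient.mk_surjective _ x
    obtain ⟨b, rfl⟩ := Submodule.Quotient.mk_surjective _ y
    rw [hbt, hbt]
    exact bqL_symm n B _ _
  have hQn : ∀ x, (∀ y, bt x y = 0) → x = 0 := by
    intro x hx
    obtain ⟨a, rfl⟩ := Submodule.Quotient.mk_surjective _ x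
    rw [Submodule.Quotient.mk_eq_zero, LinearMap.mem_ker]
    apply LinearMap.ext
    intro b
    have h := hx (Submodule.Quotient.mk b)
    rw [hbt] at h
    simpa [LinearMap.domRestrict₁₂_apply] using h
  -- the maps into the quotient
  let BQ := LinearMap.ker ((bqL n B).domRestrict₁₂ (bW n l) (bW n l))
  let j₀ : (V →ₗ[F] F) →ₗ[F] ↥(bW n l) :=
    LinearMap.codRestrict (bW n l) (LinearMap.inl F _ _) (fun φ => mem_bW_zero φ)
  let ghat := (Submodule.mkQ (R := F) (M := ↥(bW n l)) BQ).comp j₀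
  let j₁ : ↥(Ksub n l) →ₗ[F] ↥(bW n l) :=
    LinearMap.codRestrict (bW n l) ((LinearMap.inr F _ _) ∘ₗ (Ksub n l).subtype)
      (fun v => mem_bW_ofK v.2)
  let g := (Submodule.mkQ (R := F) (M := ↥(bW n l)) BQ).comp j₁
  let KQ := LinearMap.ker ((mqL n B).domRestrict₁₂ (Ksub n l) (Ksub n l))
  let s := KQ.mkQ
  have hghat : ∀ (φ : V →ₗ[F] F), (↑(j₀ φ) : (V →ₗ[F] F) × (ℕ → V)) = (φ, 0) := fun φ => rfl
  have hgval : ∀ (v : ↥(Ksub n l)), (↑(j₁ v) : (V →ₗ[F] F) × (ℕ → V)) = (0, ↑v) := fun v => rfl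
  -- isotropy of I := range ghat
  have hI : ∀ x ∈ LinearMap.range ghat, ∀ y ∈ LinearMap.range ghat, bt x y = 0 := by
    rintro x ⟨φ, rfl⟩ y ⟨ψ, rfl⟩
    show bt (Submodule.Quotient.mk (j₀ φ)) (Submodule.Quotient.mk (j₀ ψ)) = 0
    rw [hbt]
    rw [hghat, hghat]
    exact part1 φ ψ
  have hs : Function.Surjective s := Submodule.mkQ_surjective KQ
  have hform : ∀ x y : ↥(Ksub n l), bt (g x) (g y) = t (s x) (s y) := by
    intro x y
    show bt (Submodule.Quotient.mk (j₁ x)) (Submodule.Quotient.mk (j₁ y))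
      = t (Submodule.Quotient.mk x) (Submodule.Quotient.mk y)
    rw [hbt, ht, hgval, hgval]
    have h := key 0 0 (↑x) (↑y) (Ksub_mem_l x.2) (Ksub_sum_eq x.2) (Ksub_mem_l y.2)
    rw [h, LinearMap.zero_apply, zero_add]
  have hrange : LinearMap.range g ⊔ LinearMap.range ghat
      = LinearMap.BilinForm.orthogonal bt (LinearMap.range ghat) := by
    apply le_antisymm
    · rw [sup_le_iff]
      constructor
      · rintro z ⟨v, rfl⟩
        intro y hy
        obtain ⟨ψ, rfl⟩ := hy
        show bt (Submodule.Quotient.mk (j₀ ψ)) (Submodule.Quotient.mk (j₁ v)) = 0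
        rw [hbt, hghat, hgval]
        rw [keyval ψ (0, ↑v) (mem_bW_ofK v.2)]
        rw [Ksub_sum_eq v.2, map_zero]
      · rintro z ⟨φ, rfl⟩
        intro y hy
        obtain ⟨ψ, rfl⟩ := hy
        show bt (Submodule.Quotient.mk (j₀ ψ)) (Submodule.Quotient.mk (j₀ φ)) = 0
        rw [hbt, hghat, hghat]
        exact part1 ψ φ
    · intro z hz
      obtain ⟨x, rfl⟩ := Submodule.Quotient.mk_surjective _ z
      have hx2 : ∑ i ∈ Icc 1 n, (↑x : (V →ₗ[F] F) × (ℕ → V)).2 i = 0 := by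
        apply (part2 _ x.2).1
        intro ψ
        have h := hz (ghat ψ) ⟨ψ, rfl⟩
        show bqL n B (ψ, 0) ↑x = 0
        have h2 : bt (Submodule.Quotient.mk (j₀ ψ)) (Submodule.Quotient.mk x) = 0 := h
        rw [hbt, hghat] at h2
        exact h2
      have hxK : (↑x : (V →ₗ[F] F) × (ℕ → V)).2 ∈ Ksub n l := mem_Ksub_of x.2 hx2
      have hxeq : x = j₁ ⟨(↑x : (V →ₗ[F] F) × (ℕ → V)).2, hxK⟩
          + j₀ (↑x : (V →ₗ[F] F) × (ℕ → V)).1 := by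
        apply Subtype.ext
        rw [Submodule.coe_add, hgval, hghat]
        apply Prod.ext <;> simp
      apply Submodule.mem_sup.2
      refine ⟨g ⟨(↑x : (V →ₗ[F] F) × (ℕ → V)).2, hxK⟩, ⟨_, rfl⟩,
        ghat (↑x : (V →ₗ[F] F) × (ℕ → V)).1, ⟨_, rfl⟩, ?_⟩
      show BQ.mkQ (j₁ _) + BQ.mkQ (j₀ _) = Submodule.Quotient.mk x
      rw [← map_add, ← hxeq]
      rfl
  exact wittEquiv_of_subquotient bt t hQs hQn hq's hq'n (LinearMap.range ghat) hI g s hs hform hrange
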